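/- Let σ > 0, let A and B be t×t positive semidefinite Hermitian complex matrices with rank(A) ≤ r2 and rank(B) ≤ r3, and let K be a t×t positive semidefinite Hermitian matrix. Then det(I_t + ((1/(1+σ²))·A + B)·K) ≥ (1+σ²)^(−min(t, r2+r3)) · det(I_t + (A+B)·K). -/

import Mathlib

/-!
With `S = √K`, the Weinstein–Aronszajn identity `det (1 + X S²) = det (1 + S X S)` turns both
sides into determinants of `1 + M` and `1 + S (c A + B) S`, where `M = S (A + B) S ≥ 0`,
`c = (1 + σ²)⁻¹` and `S (c A + B) S = c M + (1 - c) S B S`. Dropping `(1 - c) S B S ≥ 0` only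
lowers the determinant, and in the eigenbasis of `M` we have `1 + c λ ≥ c (1 + λ)` for every
eigenvalue `λ ≠ 0`, while the factor is `1` when `λ = 0`. Hence
`det (1 + c M) ≥ c ^ rank M * det (1 + M)`, and `rank M ≤ min t (rank A + rank B)`.
-/

open Matrix ComplexOrder Finset
open scoped MatrixOrder

theorem Finset.pow_card_mul_prod_one_add_le_prod_one_add_mul {ι : Type*} (s : Finset ι) {c : ℝ}
    (hc₀ : 0 ≤ c) (hc₁ : c ≤ 1) {x : ι → ℝ} (hx : ∀ i ∈ s, 0 ≤ x i) :
    c ^ #{i ∈ s | x i ≠ 0} * ∏ i ∈ s, (1 + x i) ≤ ∏ i ∈ s, (1 + c * x i) := by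
  classical
  rw [← prod_const, prod_filter, ← prod_mul_distrib]
  refine prod_le_prod (fun i hi => ?_) (fun i hi => ?_)
  · have := hx i hi
    split_ifs <;> positivity
  · by_cases h : x i = 0
    · simp [h]
    · rw [if_pos h]
      nlinarith [hx i hi]

namespace Matrix

theorem rank_add_le {m n K : Type*} [Fintype n] [Field K] (A B : Matrix m n K) :
    (A + B).rank ≤ A.rank + B.rank := by
  rw [rank, rank, rank, mulVecLin_add]
  exact (Submodule.finrank_mono (LinearMap.range_add_le _ _)).trans
    (Submodule.finrank_add_le_finrank_add_finrank _ _)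

theorem det_one_add_mul_mul_self {n R : Type*} [Fintype n] [DecidableEq n] [CommRing R]
    (X S : Matrix n n R) : (1 + X * (S * S)).det = (1 + S * X * S).det := by
  rw [← Matrix.mul_assoc, det_one_add_mul_comm, Matrix.mul_assoc]

variable {n 𝕜 : Type*} [Fintype n] [DecidableEq n] [RCLike 𝕜]

theorem IsHermitian.det_cfc {A : Matrix n n 𝕜} (hA : A.IsHermitian) (f : ℝ → ℝ) :
    (cfc f A).det = ∏ i, (f (hA.eigenvalues i) : 𝕜) := by
  rw [hA.cfc_eq]
  simp [IsHermitian.cfc, -Unitary.conjStarAlgAut_apply]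

theorem IsHermitian.det_one_add_smul {A : Matrix n n 𝕜} (hA : A.IsHermitian) (c : ℝ) :
    (1 + c • A).det = ((∏ i, (1 + c * hA.eigenvalues i) : ℝ) : 𝕜) := by
  have hA' : IsSelfAdjoint A := hA
  have h : 1 + c • A = cfc (fun x => 1 + c * x) A := by
    rw [cfc_add .., cfc_const_one .., cfc_const_mul .., cfc_id' ..]
  rw [h, hA.det_cfc]
  push_cast
  rfl

theorem PosSemidef.one_le_det_one_add {A : Matrix n n 𝕜} (hA : A.PosSemidef) :
    1 ≤ (1 + A).det := by
  have h := hA.1.det_one_add_smul 1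
  rw [one_smul] at h
  rw [h, ← RCLike.ofReal_one, RCLike.ofReal_le_ofReal]
  exact one_le_prod fun i _ => by linarith [hA.eigenvalues_nonneg i]

theorem PosDef.det_le_det_add {P N : Matrix n n 𝕜} (hP : P.PosDef) (hN : N.PosSemidef) :
    P.det ≤ (P + N).det := by
  set T := CFC.sqrt P
  have hTT : T * T = P := CFC.sqrt_mul_sqrt_self P hP.posSemidef.nonneg
  have hT : T.IsHermitian := (CFC.sqrt_nonneg P).posSemidef.1
  have hTunit : IsUnit T.det := by
    refine isUnit_iff_ne_zero.mpr fun h => hP.det_pos.ne' ?_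
    rw [← hTT, det_mul, h, mul_zero]
  have hW : (T⁻¹ * N * T⁻¹).PosSemidef := by
    simpa only [hT.inv.eq] using hN.conjTranspose_mul_mul_same T⁻¹
  have hfactor : P + N = T * (1 + T⁻¹ * N * T⁻¹) * T := by
    rw [mul_add, mul_one, add_mul, hTT, ← Matrix.mul_assoc, ← Matrix.mul_assoc,
      mul_nonsing_inv _ hTunit, one_mul, Matrix.mul_assoc, nonsing_inv_mul _ hTunit, mul_one]
  calc P.det = 1 * P.det := (one_mul _).symm
    _ ≤ (1 + T⁻¹ * N * T⁻¹).det * P.det :=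
      mul_le_mul_of_nonneg_right hW.one_le_det_one_add hP.det_pos.le
    _ = (P + N).det := by rw [hfactor, det_mul, det_mul, ← hTT, det_mul]; ring

theorem PosSemidef.pow_mul_det_one_add_le_det_one_add_smul {A : Matrix n n 𝕜}
    (hA : A.PosSemidef) {c : ℝ} (hc₀ : 0 ≤ c) (hc₁ : c ≤ 1) {m : ℕ} (hm : A.rank ≤ m) :
    (c : 𝕜) ^ m * (1 + A).det ≤ (1 + c • A).det := by
  have hrank : #{i | hA.1.eigenvalues i ≠ 0} ≤ m := by
    rwa [hA.1.rank_eq_card_non_zero_eigs, Fintype.card_subtype] at hm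
  have h1 := hA.1.det_one_add_smul 1
  rw [one_smul] at h1
  rw [h1, hA.1.det_one_add_smul, ← RCLike.ofReal_pow, ← RCLike.ofReal_mul,
    RCLike.ofReal_le_ofReal]
  calc c ^ m * ∏ i, (1 + 1 * hA.1.eigenvalues i)
      ≤ c ^ #{i | hA.1.eigenvalues i ≠ 0} * ∏ i, (1 + hA.1.eigenvalues i) := by
        simp only [one_mul]
        exact mul_le_mul_of_nonneg_right (pow_le_pow_of_le_one hc₀ hc₁ hrank)
          (prod_nonneg fun i _ => by linarith [hA.eigenvalues_nonneg i])
    _ ≤ ∏ i, (1 + c * hA.1.eigenvalues i) :=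
        univ.pow_card_mul_prod_one_add_le_prod_one_add_mul hc₀ hc₁
          fun i _ => hA.eigenvalues_nonneg i

end Matrix

theorem stmt_13_general {t : ℕ} (r2 r3 : ℕ) (σ : ℝ)
    (A B K : Matrix (Fin t) (Fin t) ℂ)
    (hA : A.PosSemidef) (hB : B.PosSemidef) (hK : K.PosSemidef)
    (hrA : A.rank ≤ r2) (hrB : B.rank ≤ r3) :
    ((1 + (σ : ℂ) ^ 2)⁻¹) ^ (min t (r2 + r3)) * (1 + (A + B) * K).det
      ≤ (1 + ((1 / (1 + (σ : ℂ) ^ 2)) • A + B) * K).det := by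
  set c : ℝ := (1 + σ ^ 2)⁻¹
  have hc₀ : 0 ≤ c := by positivity
  have hc₁ : c ≤ 1 := inv_le_one_of_one_le₀ (by nlinarith)
  have hc : (1 + (σ : ℂ) ^ 2)⁻¹ = (c : ℂ) := by push_cast [c]; rfl
  set S := CFC.sqrt K
  have hS : S.IsHermitian := (CFC.sqrt_nonneg K).posSemidef.1
  have hconj {X : Matrix (Fin t) (Fin t) ℂ} (hX : X.PosSemidef) : (S * X * S).PosSemidef := by
    simpa only [hS.eq] using hX.conjTranspose_mul_mul_same S
  set M := S * (A + B) * S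
  have hrank : M.rank ≤ min t (r2 + r3) := by
    refine le_min M.rank_le_width ?_
    calc M.rank ≤ (A + B).rank := (rank_mul_le_left _ _).trans (rank_mul_le_right _ _)
      _ ≤ r2 + r3 := (rank_add_le A B).trans (add_le_add hrA hrB)
  have hsplit : S * (c • A + B) * S = c • M + (1 - c) • (S * B * S) := by
    simp only [M, mul_add, add_mul, Matrix.mul_smul, Matrix.smul_mul]
    module
  rw [← CFC.sqrt_mul_sqrt_self K hK.nonneg, det_one_add_mul_mul_self, det_one_add_mul_mul_self,
    one_div, hc, Complex.coe_smul, hsplit, ← add_assoc]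
  calc (c : ℂ) ^ min t (r2 + r3) * (1 + M).det ≤ (1 + c • M).det :=
        (hconj (hA.add hB)).pow_mul_det_one_add_le_det_one_add_smul hc₀ hc₁ hrank
    _ ≤ _ := (PosDef.one.add_posSemidef ((hconj (hA.add hB)).smul hc₀)).det_le_det_add
        ((hconj hB).smul (sub_nonneg.2 hc₁))

theorem stmt_13 {t : ℕ} (r2 r3 : ℕ) (σ : ℝ) (hσ : 0 < σ)
    (A B K : Matrix (Fin t) (Fin t) ℂ)
    (hA : A.PosSemidef) (hB : B.PosSemidef) (hK : K.PosSemidef)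
    (hrA : A.rank ≤ r2) (hrB : B.rank ≤ r3) :
    ((1 + (σ : ℂ) ^ 2)⁻¹) ^ (min t (r2 + r3)) * (1 + (A + B) * K).det
      ≤ (1 + ((1 / (1 + (σ : ℂ) ^ 2)) • A + B) * K).det :=
  stmt_13_general r2 r3 σ A B K hA hB hK hrA hrB
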